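/- Let n ≥ 2, T ∈ (0,∞), and let w^n = (w_1^n,…,w_n^n) be the unique nonnegative C^1 solution on [0,T] of the truncated system d/dt w_i^n = (1/2) ∑_{j=1}^{i-1} p_{j,i-j} a_{j,i-j} w_j^n w_{i-j}^n − ∑_{j=1}^{n−i} a_{i,j} w_i^n w_j^n + (1/2) ∑_{j=i+1}^{n} ∑_{k=1}^{j-1} N_{j−k,k}^i (1 − p_{j−k,k}) a_{j−k,k} w_{j−k}^n w_k^n with nonnegative initial data. Then the truncated mass conservation law holds: ∑_{i=1}^{n} i w_i^n(t) = ∑_{i=1}^{n} i w_i^n(0) for all t ∈ [0,T]. -/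

import Mathlib

/-!
Weighting the `i`-th equation by the size `i` and summing, every collision of a pair `(i, j)`
with `i + j ≤ n` contributes `(i + j) aᵢⱼ wᵢ wⱼ` times `pᵢⱼ` (coalescence), times `-1` (loss of
both partners) and times `1 - pᵢⱼ` (breakage, by local mass conservation of the fragments), so
the derivative of the truncated mass vanishes identically.
-/

/-- The right-hand side of the truncated discrete coagulation equations with
collisional breakage. -/
noncomputable def truncRHS (a p : ℕ → ℕ → ℝ) (N : ℕ → ℕ → ℕ → ℝ) (n i : ℕ)
    (w : ℕ → ℝ) : ℝ :=
    (1/2) * ∑ j ∈ Finset.Icc 1 (i-1), p j (i-j) * a j (i-j) * w j * w (i-j)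
  - ∑ j ∈ Finset.Icc 1 (n-i), a i j * w i * w j
  + (1/2) * ∑ j ∈ Finset.Icc (i+1) n, ∑ k ∈ Finset.Icc 1 (j-1),
      N (j-k) k i * (1 - p (j-k) k) * a (j-k) k * w (j-k) * w k

open Finset

section Triangle

variable {M : Type*} [AddCommMonoid M]

def triangleSum (n : ℕ) (f : ℕ → ℕ → M) : M :=
  ∑ i ∈ Icc 1 n, ∑ j ∈ Icc 1 (n - i), f i j

theorem triangleSum_comm (n : ℕ) (f : ℕ → ℕ → M) :
    triangleSum n (fun i j => f j i) = triangleSum n f :=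
  sum_comm' fun i j => by simp only [mem_Icc]; omega

theorem sum_Icc_sum_Icc_sub_eq_triangleSum (n : ℕ) (f : ℕ → ℕ → M) :
    ∑ i ∈ Icc 1 n, ∑ j ∈ Icc 1 (i - 1), f j (i - j) = triangleSum n f := by
  rw [sum_comm' (t' := Icc 1 n) (s' := fun j => Icc (j + 1) n)
    fun i j => by simp only [mem_Icc]; omega]
  refine sum_congr rfl fun j hj => ?_
  have hshift : Icc (j + 1) n = (Icc 1 (n - j)).map (addLeftEmbedding j) := by
    rw [map_add_left_Icc, Nat.add_sub_cancel' (mem_Icc.1 hj).2]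
  simp only [hshift, sum_map, addLeftEmbedding_apply, Nat.add_sub_cancel_left]

theorem sum_Icc_sum_Icc_succ_comm (n : ℕ) (f : ℕ → ℕ → M) :
    ∑ i ∈ Icc 1 n, ∑ j ∈ Icc (i + 1) n, f i j = ∑ j ∈ Icc 1 n, ∑ i ∈ Icc 1 (j - 1), f i j :=
  sum_comm' fun i j => by simp only [mem_Icc]; omega

end Triangle

theorem sum_mul_sum_Icc_sub_eq_triangleSum (n : ℕ) (f : ℕ → ℕ → ℝ) :
    ∑ i ∈ Icc 1 n, (i : ℝ) * ∑ j ∈ Icc 1 (i - 1), f j (i - j)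
      = triangleSum n fun i j => ((i : ℝ) + j) * f i j := by
  rw [← sum_Icc_sum_Icc_sub_eq_triangleSum]
  refine sum_congr rfl fun i _ => mul_sum _ _ _ |>.trans <| sum_congr rfl fun j hj => ?_
  rw [← Nat.cast_add, Nat.add_sub_cancel' (by simp only [mem_Icc] at hj; omega)]

theorem two_mul_sum_mul_sum_eq_triangleSum_of_symm (n : ℕ) {f : ℕ → ℕ → ℝ}
    (hf : ∀ i j, f i j = f j i) :
    2 * ∑ i ∈ Icc 1 n, (i : ℝ) * ∑ j ∈ Icc 1 (n - i), f i j
      = triangleSum n fun i j => ((i : ℝ) + j) * f i j := by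
  have hswap : triangleSum n (fun i j => (i : ℝ) * f i j)
      = triangleSum n fun i j => (j : ℝ) * f i j := by
    rw [← triangleSum_comm n fun i j => (j : ℝ) * f i j]
    simp only [hf]
  calc 2 * ∑ i ∈ Icc 1 n, (i : ℝ) * ∑ j ∈ Icc 1 (n - i), f i j
      = triangleSum n (fun i j => (i : ℝ) * f i j) + triangleSum n fun i j => (i : ℝ) * f i j := by
        rw [two_mul]; simp only [triangleSum, mul_sum]
    _ = triangleSum n (fun i j => (i : ℝ) * f i j) + triangleSum n fun i j => (j : ℝ) * f i j :=
        congrArg _ hswap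
    _ = triangleSum n fun i j => ((i : ℝ) + j) * f i j := by
        simp only [triangleSum, ← sum_add_distrib, add_mul]

theorem sum_mul_sum_fragments_eq_triangleSum (n : ℕ) (N : ℕ → ℕ → ℕ → ℝ)
    (hN_mass : ∀ i j : ℕ, 1 ≤ i → 1 ≤ j →
      ∑ s ∈ Icc 1 (i + j - 1), (s : ℝ) * N i j s = (i : ℝ) + (j : ℝ))
    (f : ℕ → ℕ → ℝ) :
    ∑ i ∈ Icc 1 n, (i : ℝ) * ∑ j ∈ Icc (i + 1) n, ∑ k ∈ Icc 1 (j - 1), N (j - k) k i * f (j - k) k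
      = triangleSum n fun i j => ((i : ℝ) + j) * f i j := by
  have hfragment : ∀ j k : ℕ, k ∈ Icc 1 (j - 1) →
      ∑ i ∈ Icc 1 (j - 1), (i : ℝ) * N (j - k) k i = ((j - k : ℕ) : ℝ) + k := by
    intro j k hk
    simp only [mem_Icc] at hk
    simpa only [Nat.sub_add_cancel (by omega : k ≤ j)] using hN_mass (j - k) k (by omega) hk.1
  calc ∑ i ∈ Icc 1 n, (i : ℝ) * ∑ j ∈ Icc (i + 1) n, ∑ k ∈ Icc 1 (j - 1), N (j - k) k i * f (j - k) k
      = ∑ j ∈ Icc 1 n, ∑ k ∈ Icc 1 (j - 1),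
          (∑ i ∈ Icc 1 (j - 1), (i : ℝ) * N (j - k) k i) * f (j - k) k := by
        simp only [mul_sum, sum_mul, mul_assoc]
        rw [sum_Icc_sum_Icc_succ_comm]
        exact sum_congr rfl fun j _ => sum_comm
    _ = triangleSum n fun i j => ((i : ℝ) + j) * f i j := by
        rw [← triangleSum_comm, ← sum_Icc_sum_Icc_sub_eq_triangleSum]
        exact sum_congr rfl fun j _ => sum_congr rfl fun k hk => by rw [hfragment j k hk]

theorem sum_mul_truncRHS_eq_zero (a p : ℕ → ℕ → ℝ) (N : ℕ → ℕ → ℕ → ℝ)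
    (ha_symm : ∀ i j, a i j = a j i)
    (hN_mass : ∀ i j : ℕ, 1 ≤ i → 1 ≤ j →
      ∑ s ∈ Icc 1 (i + j - 1), (s : ℝ) * N i j s = (i : ℝ) + (j : ℝ))
    (n : ℕ) (u : ℕ → ℝ) :
    ∑ i ∈ Icc 1 n, (i : ℝ) * truncRHS a p N n i u = 0 := by
  set collision : ℕ → ℕ → ℝ := fun i j => a i j * u i * u j
  have hsplit : ∀ i : ℕ, (i : ℝ) * truncRHS a p N n i u
      = (1 / 2) * ((i : ℝ) * ∑ j ∈ Icc 1 (i - 1), p j (i - j) * collision j (i - j))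
        - (1 / 2) * (2 * ((i : ℝ) * ∑ j ∈ Icc 1 (n - i), collision i j))
        + (1 / 2) * ((i : ℝ) * ∑ j ∈ Icc (i + 1) n, ∑ k ∈ Icc 1 (j - 1),
            N (j - k) k i * ((1 - p (j - k) k) * collision (j - k) k)) := by
    intro i
    simp only [truncRHS, collision, mul_assoc]
    ring
  have hcollision_symm : ∀ i j, collision i j = collision j i := fun i j => by
    simp only [collision, ha_symm i j]; ring
  have hbalance : ((triangleSum n fun i j => ((i : ℝ) + j) * (p i j * collision i j))
      + triangleSum n fun i j => ((i : ℝ) + j) * ((1 - p i j) * collision i j))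
      = triangleSum n fun i j => ((i : ℝ) + j) * collision i j := by
    simp only [triangleSum, ← sum_add_distrib, ← mul_add, ← add_mul, add_sub_cancel, one_mul]
  rw [sum_congr rfl fun i _ => hsplit i, sum_add_distrib, sum_sub_distrib]
  simp only [← mul_sum]
  rw [sum_mul_sum_Icc_sub_eq_triangleSum n fun i j => p i j * collision i j,
    two_mul_sum_mul_sum_eq_triangleSum_of_symm n hcollision_symm,
    sum_mul_sum_fragments_eq_triangleSum n N hN_mass fun i j => (1 - p i j) * collision i j]
  linear_combination (1 / 2 : ℝ) * hbalance

theorem eq_of_hasDerivWithinAt_Icc_zero {E : Type*} [NormedAddCommGroup E] [NormedSpace ℝ E]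
    {f : ℝ → E} {a b : ℝ} (hf : ∀ x ∈ Set.Icc a b, HasDerivWithinAt f 0 (Set.Icc a b) x) :
    ∀ x ∈ Set.Icc a b, f x = f a := by
  simpa only [zero_mul, norm_le_zero_iff, sub_eq_zero] using
    norm_image_sub_le_of_norm_deriv_le_segment' hf fun _ _ => norm_zero.le

theorem truncated_mass_conservation_general
    (a p : ℕ → ℕ → ℝ) (N : ℕ → ℕ → ℕ → ℝ)
    (ha_symm : ∀ i j, a i j = a j i)
    (hN_mass : ∀ i j, 1 ≤ i → 1 ≤ j →
      ∑ s ∈ Finset.Icc 1 (i+j-1), (Nat.cast s : ℝ) * N i j s = (i : ℝ) + (j : ℝ))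
    (n : ℕ) (T : ℝ)
    (w : ℕ → ℝ → ℝ)
    (hw_ode : ∀ i ∈ Finset.Icc 1 n, ∀ t ∈ Set.Icc (0:ℝ) T,
      HasDerivWithinAt (w i) (truncRHS a p N n i (fun j => w j t)) (Set.Icc 0 T) t) :
    ∀ t ∈ Set.Icc (0:ℝ) T,
      ∑ i ∈ Finset.Icc 1 n, (Nat.cast i : ℝ) * w i t
        = ∑ i ∈ Finset.Icc 1 n, (Nat.cast i : ℝ) * w i 0 := by
  refine eq_of_hasDerivWithinAt_Icc_zero fun t ht => ?_
  simpa only [sum_mul_truncRHS_eq_zero a p N ha_symm hN_mass] using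
    HasDerivWithinAt.fun_sum fun i hi => (hw_ode i hi t ht).const_mul (i : ℝ)

/-- Truncated mass conservation: any nonnegative `C¹` solution of the truncated
coagulation–collisional-breakage system on `[0, T]` conserves the truncated mass
`∑_{i=1}^n i wᵢⁿ(t)`. -/
theorem truncated_mass_conservation
    (a p : ℕ → ℕ → ℝ) (N : ℕ → ℕ → ℕ → ℝ) (A : ℝ) (hA : 0 < A)
    (ha_nonneg : ∀ i j, 0 ≤ a i j) (ha_symm : ∀ i j, a i j = a j i)
    (ha_bound : ∀ i j, 1 ≤ i → 1 ≤ j → a i j ≤ A * ((i : ℝ) + (j : ℝ)))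
    (hp_nonneg : ∀ i j, 0 ≤ p i j) (hp_symm : ∀ i j, p i j = p j i)
    (hp_le : ∀ i j, p i j ≤ 1)
    (hN_nonneg : ∀ i j s, 0 ≤ N i j s) (hN_symm : ∀ i j s, N i j s = N j i s)
    (hN_mass : ∀ i j, 1 ≤ i → 1 ≤ j →
      ∑ s ∈ Finset.Icc 1 (i+j-1), (Nat.cast s : ℝ) * N i j s = (i : ℝ) + (j : ℝ))
    (n : ℕ) (hn : 2 ≤ n) (T : ℝ) (hT : 0 < T)
    (w : ℕ → ℝ → ℝ)
    (hw_nonneg : ∀ i ∈ Finset.Icc 1 n, ∀ t ∈ Set.Icc (0:ℝ) T, 0 ≤ w i t)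
    (hw_init_nonneg : ∀ i ∈ Finset.Icc 1 n, 0 ≤ w i 0)
    (hw_ode : ∀ i ∈ Finset.Icc 1 n, ∀ t ∈ Set.Icc (0:ℝ) T,
      HasDerivWithinAt (w i) (truncRHS a p N n i (fun j => w j t)) (Set.Icc 0 T) t) :
    ∀ t ∈ Set.Icc (0:ℝ) T,
      ∑ i ∈ Finset.Icc 1 n, (Nat.cast i : ℝ) * w i t
        = ∑ i ∈ Finset.Icc 1 n, (Nat.cast i : ℝ) * w i 0 :=
  truncated_mass_conservation_general a p N ha_symm hN_mass n T w hw_ode
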